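/- arXiv:gr-qc/9703030 — 9 statements merged into one kernel-verified Lean document; each statement's English description precedes it below -/
import Mathlib

section
/- For every α ∈ ℝ and every ε ∈ {−1, 1}, the map F_ε : ℝ² → ℝ² defined by F_ε(u₁, u₂) = (u₁ − ε·cos α·√(1 + u₁² + u₂²), u₂ − ε·sin α·√(1 + u₁² + u₂²)) is a bijection from ℝ² onto the open half-plane {(x₁, x₂) ∈ ℝ² : ε·(x₁ cos α + x₂ sin α) < 0}. -/
/-!
For a unit vector `n`, write `r = √(1 + ‖u‖²)` and `x = u - r • n`. Expanding `‖x‖²` gives the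
identity `2 r ⟪x, n⟫ = -(1 + ‖x‖²)`, so `⟪x, n⟫ < 0`, and `r`, hence `u = x + r • n`, is recovered
from `x` alone. Conversely, for `⟪x, n⟫ < 0` the number `r = -(1 + ‖x‖²) / (2 ⟪x, n⟫)` is positive
and satisfies `1 + ‖x + r • n‖² = r²`, which makes `x ↦ x + r • n` a right inverse.
-/

open Set RealInnerProductSpace

variable {E : Type*} [NormedAddCommGroup E] [InnerProductSpace ℝ E] {n : E}

/-- Projection of the point `(√(1 + ‖u‖²), u)` of the hyperboloid `X⁰² - ‖X‖² = 1` along the null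
direction `(1, n)` onto the hyperplane `X⁰ = 0`. -/
noncomputable def nullProj (n u : E) : E := u - √(1 + ‖u‖ ^ 2) • n

noncomputable def nullLiftHeight (n x : E) : ℝ := -(1 + ‖x‖ ^ 2) / (2 * ⟪x, n⟫)

noncomputable def nullLift (n x : E) : E := x + nullLiftHeight n x • n

lemma norm_add_smul_sq_of_norm_eq_one (hn : ‖n‖ = 1) (x : E) (t : ℝ) :
    ‖x + t • n‖ ^ 2 = ‖x‖ ^ 2 + 2 * t * ⟪x, n⟫ + t ^ 2 := by
  rw [norm_add_sq_real, inner_smul_right, norm_smul, mul_pow, hn, Real.norm_eq_abs, sq_abs]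
  ring

lemma two_mul_sqrt_mul_inner_nullProj (hn : ‖n‖ = 1) (u : E) :
    2 * √(1 + ‖u‖ ^ 2) * ⟪nullProj n u, n⟫ = -(1 + ‖nullProj n u‖ ^ 2) := by
  have hr : √(1 + ‖u‖ ^ 2) ^ 2 = 1 + ‖u‖ ^ 2 := Real.sq_sqrt (by positivity)
  rw [nullProj, sub_eq_add_neg, ← neg_smul, norm_add_smul_sq_of_norm_eq_one hn,
    inner_add_left, inner_smul_left, real_inner_self_eq_norm_sq, hn]
  simp only [conj_trivial]
  linear_combination -hr

lemma inner_nullProj_neg (hn : ‖n‖ = 1) (u : E) : ⟪nullProj n u, n⟫ < 0 := by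
  have h := two_mul_sqrt_mul_inner_nullProj hn u
  have hr : 0 < √(1 + ‖u‖ ^ 2) := Real.sqrt_pos.2 (by positivity)
  nlinarith [sq_nonneg ‖nullProj n u‖]

lemma nullLiftHeight_nullProj (hn : ‖n‖ = 1) (u : E) :
    nullLiftHeight n (nullProj n u) = √(1 + ‖u‖ ^ 2) := by
  have h := two_mul_sqrt_mul_inner_nullProj hn u
  have hne : 2 * ⟪nullProj n u, n⟫ ≠ 0 :=
    mul_ne_zero two_ne_zero (inner_nullProj_neg hn u).ne
  rw [nullLiftHeight, div_eq_iff hne, ← h]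
  ring

lemma nullLiftHeight_pos {x : E} (hx : ⟪x, n⟫ < 0) : 0 < nullLiftHeight n x :=
  div_pos_of_neg_of_neg (by nlinarith [sq_nonneg ‖x‖]) (by linarith)

lemma one_add_norm_nullLift_sq (hn : ‖n‖ = 1) {x : E} (hx : ⟪x, n⟫ < 0) :
    1 + ‖nullLift n x‖ ^ 2 = nullLiftHeight n x ^ 2 := by
  have h : 2 * nullLiftHeight n x * ⟪x, n⟫ = -(1 + ‖x‖ ^ 2) := by
    rw [nullLiftHeight]; field_simp [hx.ne]
  rw [nullLift, norm_add_smul_sq_of_norm_eq_one hn]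
  linear_combination h

lemma invOn_nullLift_nullProj (hn : ‖n‖ = 1) :
    InvOn (nullLift n) (nullProj n) univ {x | ⟪x, n⟫ < 0} := by
  constructor
  · intro u _
    rw [nullLift, nullLiftHeight_nullProj hn, nullProj, sub_add_cancel]
  · intro x hx
    rw [nullProj, one_add_norm_nullLift_sq hn hx,
      Real.sqrt_sq (nullLiftHeight_pos hx).le, nullLift, add_sub_cancel_right]

theorem bijOn_nullProj (hn : ‖n‖ = 1) :
    BijOn (nullProj n) univ {x | ⟪x, n⟫ < 0} :=
  (invOn_nullLift_nullProj hn).bijOn (fun u _ ↦ inner_nullProj_neg hn u)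
    (mapsTo_univ _ _)

theorem bijOn_prod_nullProj {a b : ℝ} (hab : a ^ 2 + b ^ 2 = 1) :
    BijOn (fun u : ℝ × ℝ ↦ (u.1 - a * √(1 + u.1 ^ 2 + u.2 ^ 2), u.2 - b * √(1 + u.1 ^ 2 + u.2 ^ 2)))
      univ {x | x.1 * a + x.2 * b < 0} := by
  -- `ℝ × ℝ` carries the sup norm; the Euclidean structure lives on `WithLp 2 (ℝ × ℝ)`.
  set e := WithLp.equiv 2 (ℝ × ℝ)
  set n : WithLp 2 (ℝ × ℝ) := WithLp.toLp 2 (a, b)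
  have hn : ‖n‖ = 1 := by
    rw [← Real.sqrt_sq (norm_nonneg n), WithLp.prod_norm_sq_eq_of_L2]
    simp [n, hab]
  have he : BijOn e {x | ⟪x, n⟫ < 0} {x | x.1 * a + x.2 * b < 0} :=
    e.bijOn fun x ↦ by simp [e, n, mul_comm]
  convert he.comp ((bijOn_nullProj hn).comp e.symm.bijective.bijOn_univ) using 1
  funext u
  ext <;> simp [e, n, nullProj, WithLp.prod_norm_sq_eq_of_L2, add_assoc, mul_comm]

/-- For every `α ∈ ℝ` and `ε ∈ {−1, 1}`, the map
`F_ε(u₁, u₂) = (u₁ − ε·cos α·√(1 + u₁² + u₂²), u₂ − ε·sin α·√(1 + u₁² + u₂²))`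
is a bijection from `ℝ²` onto the open half-plane
`{(x₁, x₂) : ε·(x₁ cos α + x₂ sin α) < 0}`. -/
theorem stmt1 (α ε : ℝ) (hε : ε = 1 ∨ ε = -1) :
    let F : ℝ × ℝ → ℝ × ℝ := fun u =>
      (u.1 - ε * Real.cos α * Real.sqrt (1 + u.1 ^ 2 + u.2 ^ 2),
       u.2 - ε * Real.sin α * Real.sqrt (1 + u.1 ^ 2 + u.2 ^ 2))
    Set.BijOn F Set.univ
      {x : ℝ × ℝ | ε * (x.1 * Real.cos α + x.2 * Real.sin α) < 0} := by
  have hε2 : ε ^ 2 = 1 := by rcases hε with rfl | rfl <;> norm_num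
  have hunit : (ε * Real.cos α) ^ 2 + (ε * Real.sin α) ^ 2 = 1 := by
    linear_combination (Real.cos α ^ 2 + Real.sin α ^ 2) * hε2 + Real.cos_sq_add_sin_sq α
  have hset : ∀ x : ℝ × ℝ, ε * (x.1 * Real.cos α + x.2 * Real.sin α) =
      x.1 * (ε * Real.cos α) + x.2 * (ε * Real.sin α) := fun x ↦ by ring
  simpa only [hset] using bijOn_prod_nullProj hunit
end

section
/- For every α ∈ ℝ, the union of the images F₊₁(ℝ²) ∪ F₋₁(ℝ²) equals ℝ² minus the straight line {(x₁, x₂) : x₁ cos α + x₂ sin α = 0}, and this union is an open and dense subset of ℝ². -/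
private lemma stmt2_fwd (α ε u1 u2 : ℝ) (hε : ε ^ 2 = 1) :
    (u1 - ε * Real.cos α * Real.sqrt (1 + u1 ^ 2 + u2 ^ 2)) * Real.cos α +
      (u2 - ε * Real.sin α * Real.sqrt (1 + u1 ^ 2 + u2 ^ 2)) * Real.sin α ≠ 0 := by
  set S := Real.sqrt (1 + u1 ^ 2 + u2 ^ 2) with hS
  have hS2 : S ^ 2 = 1 + u1 ^ 2 + u2 ^ 2 := Real.sq_sqrt (by positivity)
  have hpyth := Real.sin_sq_add_cos_sq α
  intro h
  have hd : u1 * Real.cos α + u2 * Real.sin α = ε * S := by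
    linear_combination h + ε * S * hpyth
  have hd2 : (u1 * Real.cos α + u2 * Real.sin α) ^ 2 = 1 + u1 ^ 2 + u2 ^ 2 := by
    rw [hd, mul_pow, hε, one_mul, hS2]
  have hcs : (u1 * Real.cos α + u2 * Real.sin α) ^ 2 ≤ u1 ^ 2 + u2 ^ 2 := by
    nlinarith [sq_nonneg (u1 * Real.sin α - u2 * Real.cos α), hpyth,
      sq_nonneg u1, sq_nonneg u2]
  linarith

private lemma stmt2_bwd (α x1 x2 ε : ℝ) (hε : ε ^ 2 = 1)
    (hc : ε * (x1 * Real.cos α + x2 * Real.sin α) < 0) :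
    ∃ u1 u2 : ℝ,
      u1 - ε * Real.cos α * Real.sqrt (1 + u1 ^ 2 + u2 ^ 2) = x1 ∧
      u2 - ε * Real.sin α * Real.sqrt (1 + u1 ^ 2 + u2 ^ 2) = x2 := by
  have hpyth := Real.sin_sq_add_cos_sq α
  have hd : 0 < -(2 * ε * (x1 * Real.cos α + x2 * Real.sin α)) := by nlinarith
  set s := (1 + x1 ^ 2 + x2 ^ 2) / (-(2 * ε * (x1 * Real.cos α + x2 * Real.sin α))) with hs
  have hspos : 0 < s := div_pos (by positivity) hd
  have h2 : -(2 * ε * (x1 * Real.cos α + x2 * Real.sin α)) * s = 1 + x1 ^ 2 + x2 ^ 2 := by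
    rw [hs, mul_comm]
    exact div_mul_cancel₀ _ (ne_of_gt hd)
  have hkey : 1 + (x1 + ε * Real.cos α * s) ^ 2 + (x2 + ε * Real.sin α * s) ^ 2 = s ^ 2 := by
    linear_combination (-1) * h2 + s ^ 2 * (Real.cos α ^ 2 + Real.sin α ^ 2) * hε
      + s ^ 2 * hpyth
  have hsqrt : Real.sqrt (1 + (x1 + ε * Real.cos α * s) ^ 2 + (x2 + ε * Real.sin α * s) ^ 2) = s := by
    rw [hkey]; exact Real.sqrt_sq hspos.le
  exact ⟨x1 + ε * Real.cos α * s, x2 + ε * Real.sin α * s, by rw [hsqrt]; ring, by rw [hsqrt]; ring⟩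

/-- For every `α ∈ ℝ`, the union `F₁(ℝ²) ∪ F₋₁(ℝ²)` equals `ℝ²`
minus the line `{(x₁, x₂) : x₁ cos α + x₂ sin α = 0}`, and this union is an
open and dense subset of `ℝ²`. -/
theorem stmt2 (α : ℝ) :
    let F : ℝ → ℝ × ℝ → ℝ × ℝ := fun ε u =>
      (u.1 - ε * Real.cos α * Real.sqrt (1 + u.1 ^ 2 + u.2 ^ 2),
       u.2 - ε * Real.sin α * Real.sqrt (1 + u.1 ^ 2 + u.2 ^ 2))
    Set.range (F 1) ∪ Set.range (F (-1)) =
        {x : ℝ × ℝ | x.1 * Real.cos α + x.2 * Real.sin α = 0}ᶜ ∧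
      IsOpen (Set.range (F 1) ∪ Set.range (F (-1))) ∧
      Dense (Set.range (F 1) ∪ Set.range (F (-1))) := by
  intro F
  have hset : Set.range (F 1) ∪ Set.range (F (-1)) =
      {x : ℝ × ℝ | x.1 * Real.cos α + x.2 * Real.sin α = 0}ᶜ := by
    ext x
    simp only [Set.mem_union, Set.mem_range, Set.mem_compl_iff, Set.mem_setOf_eq, F]
    constructor
    · rintro (⟨u, hu⟩ | ⟨u, hu⟩) <;> rw [← hu]
      · exact stmt2_fwd α 1 u.1 u.2 (by norm_num)
      · exact stmt2_fwd α (-1) u.1 u.2 (by norm_num)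
    · intro hc
      rcases lt_or_gt_of_ne hc with h | h
      · obtain ⟨u1, u2, h1, h2⟩ := stmt2_bwd α x.1 x.2 1 (by norm_num) (by nlinarith)
        exact Or.inl ⟨(u1, u2), Prod.ext h1 h2⟩
      · obtain ⟨u1, u2, h1, h2⟩ := stmt2_bwd α x.1 x.2 (-1) (by norm_num) (by nlinarith)
        exact Or.inr ⟨(u1, u2), Prod.ext h1 h2⟩
  have hcont : Continuous fun x : ℝ × ℝ => x.1 * Real.cos α + x.2 * Real.sin α := by
    fun_prop
  refine ⟨hset, ?_, ?_⟩
  · rw [hset]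
    exact (isClosed_eq hcont continuous_const).isOpen_compl
  · rw [hset]
    rw [Metric.dense_iff]
    intro x r hr
    by_cases hx : x.1 * Real.cos α + x.2 * Real.sin α = 0
    · refine ⟨(x.1 + (r / 2) * Real.cos α, x.2 + (r / 2) * Real.sin α), ?_, ?_⟩
      · rw [Metric.mem_ball, Prod.dist_eq]
        have hr2 : (0:ℝ) < r / 2 := by linarith
        have h1 : dist (x.1 + (r / 2) * Real.cos α) x.1 < r := by
          rw [Real.dist_eq]
          have he : x.1 + r / 2 * Real.cos α - x.1 = r / 2 * Real.cos α := by ring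
          rw [he, abs_mul, abs_of_pos hr2]
          have := Real.abs_cos_le_one α
          nlinarith
        have h2 : dist (x.2 + (r / 2) * Real.sin α) x.2 < r := by
          rw [Real.dist_eq]
          have he : x.2 + r / 2 * Real.sin α - x.2 = r / 2 * Real.sin α := by ring
          rw [he, abs_mul, abs_of_pos hr2]
          have := Real.abs_sin_le_one α
          nlinarith
        exact max_lt h1 h2
      · simp only [Set.mem_compl_iff, Set.mem_setOf_eq]
        have hpyth := Real.sin_sq_add_cos_sq α
        intro habs
        nlinarith [habs, hx, hpyth]
    · exact ⟨x, Metric.mem_ball_self hr, hx⟩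
end

section
/- Let ε ∈ {−1, 1} and let X⁰ = ε·e^{−T}·[e^{q¹} + e^{−q¹} + (q²)²e^{q¹}], X¹ = ε·e^{−T}·[e^{q¹} − e^{−q¹} − (q²)²e^{q¹}], X² = −2ε·e^{−T}·q²e^{q¹} for real T, q¹, q². Then −(X⁰)² + (X¹)² + (X²)² = −4e^{−2T}, ε·X⁰ > 0, and ε·(X⁰ + X¹) > 0. -/
/-- For `ε ∈ {−1, 1}` and the adapted coordinates
`X⁰ = ε e^{−T}[e^{q¹} + e^{−q¹} + (q²)² e^{q¹}]`,
`X¹ = ε e^{−T}[e^{q¹} − e^{−q¹} − (q²)² e^{q¹}]`,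
`X² = −2ε e^{−T} q² e^{q¹}`, one has
`−(X⁰)² + (X¹)² + (X²)² = −4 e^{−2T}`, `ε·X⁰ > 0`, and `ε·(X⁰ + X¹) > 0`. -/
theorem stmt3 (ε T q1 q2 : ℝ) (hε : ε = 1 ∨ ε = -1) :
    let X0 := ε * Real.exp (-T) *
      (Real.exp q1 + Real.exp (-q1) + q2 ^ 2 * Real.exp q1)
    let X1 := ε * Real.exp (-T) *
      (Real.exp q1 - Real.exp (-q1) - q2 ^ 2 * Real.exp q1)
    let X2 := -2 * ε * Real.exp (-T) * (q2 * Real.exp q1)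
    (-X0 ^ 2 + X1 ^ 2 + X2 ^ 2 = -4 * Real.exp (-2 * T)) ∧
      0 < ε * X0 ∧ 0 < ε * (X0 + X1) := by
  intro X0 X1 X2
  simp only [X0, X1, X2]
  have h1 : Real.exp q1 * Real.exp (-q1) = 1 := by
    rw [← Real.exp_add]; simp
  have h2 : Real.exp (-2 * T) = Real.exp (-T) * Real.exp (-T) := by
    rw [← Real.exp_add]; ring_nf
  have hpq1 := Real.exp_pos q1
  have hpq1' := Real.exp_pos (-q1)
  have hpT := Real.exp_pos (-T)
  rcases hε with h | h <;> subst h <;>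
    refine ⟨by rw [h2]; nlinarith [h1], by nlinarith [mul_pos hpT hpq1, mul_pos hpT hpq1', mul_nonneg (mul_nonneg (sq_nonneg q2) hpq1.le) hpT.le], by nlinarith [mul_pos hpT hpq1, mul_nonneg (mul_nonneg (sq_nonneg q2) hpq1.le) hpT.le]⟩
end

section
/- For all real T, q¹, q², p_T, p₁, p₂ and every ε ∈ {−1, 1}, the identity C₁·C₂ − C₃² = (1/4)·e^{2T}·(p_T² − p₁² − e^{−2q¹}p₂²) holds. -/
/-- For Martin's perennials `C₁, C₂, C₃` of the metric-torus sector
of 2+1 gravity, the identity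
`C₁·C₂ − C₃² = (1/4)·e^{2T}·(p_T² − p₁² − e^{−2q¹}p₂²)` holds. -/
theorem stmt5 (ε T q1 q2 pT p1 p2 : ℝ) (hε : ε = 1 ∨ ε = -1) :
    let C1 := -(ε / 2) * Real.exp T *
      ((Real.exp (-q1) + q2 ^ 2 * Real.exp q1) * (pT + p1) -
        2 * Real.exp (-q1) * p1 + 2 * q2 * Real.exp (-q1) * p2)
    let C2 := -(ε / 2) * Real.exp T * (Real.exp q1 * (pT + p1))
    let C3 := -(ε / 2) * Real.exp T *
      (q2 * Real.exp q1 * (pT + p1) + Real.exp (-q1) * p2)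
    C1 * C2 - C3 ^ 2 =
      1 / 4 * Real.exp (2 * T) *
        (pT ^ 2 - p1 ^ 2 - Real.exp (-2 * q1) * p2 ^ 2) := by
  intro C1 C2 C3
  have h1 : Real.exp q1 * Real.exp (-q1) = 1 := by
    rw [← Real.exp_add]; simp
  have h2 : Real.exp (2 * T) = Real.exp T * Real.exp T := by
    rw [← Real.exp_add]; ring_nf
  have h3 : Real.exp (-2 * q1) = Real.exp (-q1) * Real.exp (-q1) := by
    rw [← Real.exp_add]; ring_nf
  have hε2 : ε ^ 2 = 1 := by rcases hε with h | h <;> rw [h] <;> norm_num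
  simp only [C1, C2, C3, h2, h3]
  rcases hε with h | h <;> subst h <;>
    linear_combination (1 / 4 * Real.exp T * Real.exp T * (pT ^ 2 - p1 ^ 2)) * h1
end

section
/- Let T, q¹, q², p_T, p₁, p₂ be real numbers with p_T ≠ 0 and p_T² = p₁² + e^{−2q¹}p₂², and set ε = −sign(p_T). Then P₀ := (ε·e^T/4)·(V_T·p_T − V₁·p₁ − e^{−2q¹}·V₂·p₂) < 0, where V_T = e^{q¹} + e^{−q¹} + (q²)²e^{q¹}, V₁ = e^{q¹} − e^{−q¹} + (q²)²e^{q¹}, V₂ = 2q²e^{q¹}. -/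
lemma key (q2 pT p1 p2 a b : ℝ) (ha : 0 < a) (hb : 0 < b) (hab : a * b = 1)
    (hpT : 0 < pT) (hcon : pT ^ 2 = p1 ^ 2 + b ^ 2 * p2 ^ 2) :
    (a - b + q2 ^ 2 * a) * p1 + b ^ 2 * (2 * q2 * a) * p2
      < (a + b + q2 ^ 2 * a) * pT := by
  set VT := a + b + q2 ^ 2 * a with hVT
  set V1 := a - b + q2 ^ 2 * a with hV1
  set V2 := 2 * q2 * a with hV2
  have hVTpos : 0 < VT := by positivity
  have hnorm : VT ^ 2 - V1 ^ 2 - b ^ 2 * V2 ^ 2 = 4 := by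
    simp only [hVT, hV1, hV2]; nlinarith [hab]
  have hCS : (V1 * p1 + b ^ 2 * V2 * p2) ^ 2
      ≤ (V1 ^ 2 + b ^ 2 * V2 ^ 2) * (p1 ^ 2 + b ^ 2 * p2 ^ 2) := by
    nlinarith [sq_nonneg (V1 * p2 - V2 * p1), sq_nonneg b]
  nlinarith [mul_pos hVTpos hpT, sq_nonneg pT, mul_pos hpT hpT,
    sq_nonneg (V1 * p1 + b ^ 2 * V2 * p2 - VT * pT),
    sq_nonneg (V1 * p1 + b ^ 2 * V2 * p2 + VT * pT)]

/-- On the constraint surface `p_T² = p₁² + e^{−2q¹}p₂²` with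
`p_T ≠ 0` and `ε = −sign(p_T)`, the perennial
`P₀ = (ε e^T/4)(V_T p_T − V₁ p₁ − e^{−2q¹} V₂ p₂)` is negative. -/
theorem stmt9 (T q1 q2 pT p1 p2 : ℝ) (hpT : pT ≠ 0)
    (hcon : pT ^ 2 = p1 ^ 2 + Real.exp (-2 * q1) * p2 ^ 2) :
    let ε := -Real.sign pT
    let VT := Real.exp q1 + Real.exp (-q1) + q2 ^ 2 * Real.exp q1
    let V1 := Real.exp q1 - Real.exp (-q1) + q2 ^ 2 * Real.exp q1
    let V2 := 2 * q2 * Real.exp q1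
    ε * Real.exp T / 4 *
      (VT * pT - V1 * p1 - Real.exp (-2 * q1) * V2 * p2) < 0 := by
  intro ε VT V1 V2
  have ha : 0 < Real.exp q1 := Real.exp_pos _
  have hb : 0 < Real.exp (-q1) := Real.exp_pos _
  have hab : Real.exp q1 * Real.exp (-q1) = 1 := by
    rw [← Real.exp_add]; simp
  have hc : Real.exp (-2 * q1) = Real.exp (-q1) ^ 2 := by
    rw [← Real.exp_nat_mul]; ring_nf
  have hT : 0 < Real.exp T := Real.exp_pos _
  rcases hpT.lt_or_gt with h | h
  · have hε : ε = 1 := by simp [ε, Real.sign_of_neg h]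
    have := key q2 (-pT) (-p1) (-p2) _ _ ha hb hab (by linarith)
      (by rw [hc] at hcon; nlinarith)
    rw [hε, hc] at *
    simp only [VT, V1, V2]
    nlinarith [this]
  · have hε : ε = -1 := by simp [ε, Real.sign_of_pos h]
    have := key q2 pT p1 p2 _ _ ha hb hab h (by rw [hc] at hcon; exact hcon)
    rw [hε, hc] at *
    simp only [VT, V1, V2]
    nlinarith [this]
end

section
/- Let q¹, q², p₁, p₂ be real numbers and set Δ = (q²)² + e^{−2q¹}. Define q'¹ by e^{q'¹} = e^{q¹}·Δ, q'² = q²/Δ, p'₁ = [((q²)² − e^{−2q¹})·p₁ + 2q²e^{−2q¹}·p₂]/Δ, and p'₂ = 2q²p₁ − ((q²)² − e^{−2q¹})·p₂. Then p'₁² + e^{−2q'¹}·p'₂² = p₁² + e^{−2q¹}·p₂². -/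
/-- Invariance of the kinetic term of the super-Hamiltonian
under the class-group transformation exchanging the torus lattice generators:
with `Δ = (q²)² + e^{−2q¹}`, `e^{q'¹} = e^{q¹}Δ`, `q'² = q²/Δ`,
`p'₁ = [((q²)² − e^{−2q¹})p₁ + 2q²e^{−2q¹}p₂]/Δ`,
`p'₂ = 2q²p₁ − ((q²)² − e^{−2q¹})p₂`, one has
`p'₁² + e^{−2q'¹}p'₂² = p₁² + e^{−2q¹}p₂²`. -/
theorem stmt10 (q1 q2 p1 p2 : ℝ) :
    let Δ := q2 ^ 2 + Real.exp (-2 * q1)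
    let q1' := Real.log (Real.exp q1 * Δ)
    let p1' := ((q2 ^ 2 - Real.exp (-2 * q1)) * p1 +
      2 * q2 * Real.exp (-2 * q1) * p2) / Δ
    let p2' := 2 * q2 * p1 - (q2 ^ 2 - Real.exp (-2 * q1)) * p2
    p1' ^ 2 + Real.exp (-2 * q1') * p2' ^ 2 =
      p1 ^ 2 + Real.exp (-2 * q1) * p2 ^ 2 := by
  intro Δ q1' p1' p2'
  have hΔ : 0 < Δ := by positivity
  have hpos : 0 < Real.exp q1 * Δ := by positivity
  have hE : Real.exp (-2 * q1') = Real.exp (-2 * q1) / Δ ^ 2 := by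
    rw [show (-2 : ℝ) * q1' = -(q1' + q1') by ring, Real.exp_neg, Real.exp_add,
      Real.exp_log hpos, show (-2 : ℝ) * q1 = -(q1 + q1) by ring, Real.exp_neg,
      Real.exp_add]
    have h1 : Real.exp q1 ≠ 0 := (Real.exp_pos q1).ne'
    field_simp
  rw [hE]
  show (((q2 ^ 2 - Real.exp (-2 * q1)) * p1 +
      2 * q2 * Real.exp (-2 * q1) * p2) / Δ) ^ 2 +
      Real.exp (-2 * q1) / Δ ^ 2 *
      (2 * q2 * p1 - (q2 ^ 2 - Real.exp (-2 * q1)) * p2) ^ 2 =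
      p1 ^ 2 + Real.exp (-2 * q1) * p2 ^ 2
  have hΔ' : Δ ≠ 0 := hΔ.ne'
  have hdef : Δ = q2 ^ 2 + Real.exp (-2 * q1) := rfl
  field_simp
  rw [hdef]
  ring
end

section
/- Let x₁, x₂, p₁, p₂ be real numbers with (p₁, p₂) ≠ (0, 0), and define P̄₀ = −√(p₁² + p₂²), P̄₁ = p₁, P̄₂ = p₂, Q̄₀ = −(x₁² + x₂²)√(p₁² + p₂²), Q̄₁ = (x₁² + x₂²)p₁ − 2(x₁p₁ + x₂p₂)x₁, Q̄₂ = (x₁² + x₂²)p₂ − 2(x₁p₁ + x₂p₂)x₂, J̄⁰ = x₁p₂ − x₂p₁, J̄¹ = −x₂√(p₁² + p₂²), J̄² = x₁√(p₁² + p₂²), D̄ = x₁p₁ + x₂p₂. Then the following six relations hold: (i) P̄₀² = P̄₁² + P̄₂²; (ii) J̄⁰P̄₀ + J̄¹P̄₁ + J̄²P̄₂ = 0; (iii) Q̄₀² = Q̄₁² + Q̄₂²; (iv) D̄·√(p₁² + p₂²) = P̄₁J̄² − P̄₂J̄¹; (v) Q̄₁·(p₁² + p₂²) = P̄₁·[(J̄¹)²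 − (J̄²)²] + 2P̄₂·J̄¹J̄²; (vi) Q̄₂·(p₁² + p₂²) = 2P̄₁·J̄¹J̄² − P̄₂·[(J̄¹)² − (J̄²)²]. -/
/-- The six relations among the projections of the ten so(2,3)
perennials to the transversal surface `Γ₀`, in the chart coordinates
`(x₁, x₂, p₁, p₂)` with `(p₁, p₂) ≠ (0, 0)`. -/
theorem stmt15 (x1 x2 p1 p2 : ℝ) (hp : (p1, p2) ≠ (0, 0)) :
    let r := Real.sqrt (p1 ^ 2 + p2 ^ 2)
    let P0 := -r
    let P1 := p1
    let P2 := p2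
    let Q0 := -(x1 ^ 2 + x2 ^ 2) * r
    let Q1 := (x1 ^ 2 + x2 ^ 2) * p1 - 2 * (x1 * p1 + x2 * p2) * x1
    let Q2 := (x1 ^ 2 + x2 ^ 2) * p2 - 2 * (x1 * p1 + x2 * p2) * x2
    let J0 := x1 * p2 - x2 * p1
    let J1 := -x2 * r
    let J2 := x1 * r
    let D := x1 * p1 + x2 * p2
    P0 ^ 2 = P1 ^ 2 + P2 ^ 2 ∧
      J0 * P0 + J1 * P1 + J2 * P2 = 0 ∧
      Q0 ^ 2 = Q1 ^ 2 + Q2 ^ 2 ∧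
      D * r = P1 * J2 - P2 * J1 ∧
      Q1 * (p1 ^ 2 + p2 ^ 2) = P1 * (J1 ^ 2 - J2 ^ 2) + P2 * (2 * J1 * J2) ∧
      Q2 * (p1 ^ 2 + p2 ^ 2) = P1 * (2 * J1 * J2) - P2 * (J1 ^ 2 - J2 ^ 2) := by
  intro r P0 P1 P2 Q0 Q1 Q2 J0 J1 J2 D
  have hr : r ^ 2 = p1 ^ 2 + p2 ^ 2 :=
    Real.sq_sqrt (by positivity)
  refine ⟨by simp only [P0, P1, P2]; linear_combination hr, by simp only [P0, P1, P2, J0, J1, J2]; ring,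
    ?_, by simp only [D, P1, P2, J1, J2]; ring,
    by simp only [Q1, P1, P2, J1, J2]; linear_combination ((x1^2 - x2^2) * p1 + 2 * x1 * x2 * p2) * hr,
    by simp only [Q2, P1, P2, J1, J2]; linear_combination (2 * x1 * x2 * p1 - (x1^2 - x2^2) * p2) * hr⟩
  simp only [Q0, Q1, Q2]
  linear_combination (x1 ^ 2 + x2 ^ 2) ^ 2 * hr
end

section
/- Let ψ : ℝ² → ℂ be twice continuously differentiable and let p = (p₁, p₂) ≠ (0, 0). Then (−D̂(D̂ψ) − Ĵ⁰(Ĵ⁰ψ) + Ĵ¹(Ĵ¹ψ) + Ĵ²(Ĵ²ψ))(p) = (1/4)·ψ(p), where (Ĵ⁰ψ)(p) = i·p₂·∂ψ/∂p₁ − i·p₁·∂ψ/∂p₂, (Ĵ¹ψ)(p) = −i·√(p₁² + p₂²)·∂ψ/∂p₂, (Ĵ²ψ)(p) = i·√(p₁² + p₂²)·∂ψ/∂p₁, and (D̂ψ)(p) = i·p₁·∂ψ/∂p₁ + i·p₂·∂ψ/∂p₂ + (i/2)·ψ(p). -/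
/-!
On differentiable functions each generator is a first-order operator `a ∂₁ + b ∂₂ + c`.
Expanding the four squares with the Leibniz rule, using `∂ᵢ r = pᵢ / r` for
`r = √(p₁² + p₂²)`, `r² = p₁² + p₂²` and the symmetry of the mixed partials of a `C²`
function, all first- and second-order terms cancel; only the constant term `i/2` of `D̂`
survives, contributing `-(i/2)² = 1/4`.
-/

open Complex

section PartialDerivatives

variable {𝕜 E F : Type*} [NontriviallyNormedField 𝕜] [NormedAddCommGroup E] [NormedSpace 𝕜 E]
  [NormedAddCommGroup F] [NormedSpace 𝕜 F]

theorem DifferentiableAt.hasDerivAt_comp_mk_left {f : 𝕜 × E → F} {x : 𝕜} {y : E}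
    (hf : DifferentiableAt 𝕜 f (x, y)) :
    HasDerivAt (fun t => f (t, y)) (fderiv 𝕜 f (x, y) (1, 0)) x :=
  hf.hasFDerivAt.comp_hasDerivAt x ((hasDerivAt_id x).prodMk (hasDerivAt_const x y))

theorem DifferentiableAt.hasDerivAt_comp_mk_right {f : E × 𝕜 → F} {x : E} {y : 𝕜}
    (hf : DifferentiableAt 𝕜 f (x, y)) :
    HasDerivAt (fun t => f (x, t)) (fderiv 𝕜 f (x, y) (0, 1)) y :=
  hf.hasFDerivAt.comp_hasDerivAt y ((hasDerivAt_const y x).prodMk (hasDerivAt_id y))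

end PartialDerivatives

section SymmetricSecondDerivative

variable {𝕜 E F : Type*} [RCLike 𝕜] [NormedAddCommGroup E] [NormedSpace 𝕜 E]
  [NormedAddCommGroup F] [NormedSpace 𝕜 F]

theorem ContDiffAt.fderiv_apply_fderiv_apply_comm {f : E → F} {x : E} (hf : ContDiffAt 𝕜 2 f x) (v w : E) :
    fderiv 𝕜 (fun y => fderiv 𝕜 f y v) x w = fderiv 𝕜 (fun y => fderiv 𝕜 f y w) x v := by
  have hd : DifferentiableAt 𝕜 (fderiv 𝕜 f) x :=
    (hf.fderiv_right (m := 1) le_rfl).differentiableAt one_ne_zero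
  have hflip : ∀ u, fderiv 𝕜 (fun y => fderiv 𝕜 f y u) x = (fderiv 𝕜 (fderiv 𝕜 f) x).flip u :=
    fun u => by simp [fderiv_clm_apply hd (differentiableAt_const u)]
  rw [hflip, hflip]
  exact hf.isSymmSndFDerivAt (by simp) w v

end SymmetricSecondDerivative

noncomputable section

def partialFst (f : ℝ × ℝ → ℂ) (q : ℝ × ℝ) : ℂ := fderiv ℝ f q (1, 0)

def partialSnd (f : ℝ × ℝ → ℂ) (q : ℝ × ℝ) : ℂ := fderiv ℝ f q (0, 1)

local notation "∂₁" => partialFst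
local notation "∂₂" => partialSnd

def lineDerivFst (f : ℝ × ℝ → ℂ) (q : ℝ × ℝ) : ℂ := deriv (fun t => f (t, q.2)) q.1

def lineDerivSnd (f : ℝ × ℝ → ℂ) (q : ℝ × ℝ) : ℂ := deriv (fun t => f (q.1, t)) q.2

def radius (q : ℝ × ℝ) : ℝ := √(q.1 ^ 2 + q.2 ^ 2)

def rotationOp (f : ℝ × ℝ → ℂ) (q : ℝ × ℝ) : ℂ :=
  I * q.2 * lineDerivFst f q - I * q.1 * lineDerivSnd f q

def boostOp₁ (f : ℝ × ℝ → ℂ) (q : ℝ × ℝ) : ℂ := -I * radius q * lineDerivSnd f q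

def boostOp₂ (f : ℝ × ℝ → ℂ) (q : ℝ × ℝ) : ℂ := I * radius q * lineDerivFst f q

def dilationOp (f : ℝ × ℝ → ℂ) (q : ℝ × ℝ) : ℂ :=
  I * q.1 * lineDerivFst f q + I * q.2 * lineDerivSnd f q + I / 2 * f q

theorem lineDerivFst_eq_partialFst {f : ℝ × ℝ → ℂ} (hf : Differentiable ℝ f) :
    lineDerivFst f = ∂₁ f :=
  funext fun q => (hf q).hasDerivAt_comp_mk_left.deriv

theorem lineDerivSnd_eq_partialSnd {f : ℝ × ℝ → ℂ} (hf : Differentiable ℝ f) :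
    lineDerivSnd f = ∂₂ f :=
  funext fun q => (hf q).hasDerivAt_comp_mk_right.deriv

theorem ContDiff.partialFst {f : ℝ × ℝ → ℂ} (hf : ContDiff ℝ 2 f) : ContDiff ℝ 1 (∂₁ f) :=
  (hf.fderiv_right one_add_one_eq_two.le).clm_apply contDiff_const

theorem ContDiff.partialSnd {f : ℝ × ℝ → ℂ} (hf : ContDiff ℝ 2 f) : ContDiff ℝ 1 (∂₂ f) :=
  (hf.fderiv_right one_add_one_eq_two.le).clm_apply contDiff_const

theorem partialFst_partialSnd_comm {f : ℝ × ℝ → ℂ} (hf : ContDiff ℝ 2 f) (q : ℝ × ℝ) :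
    ∂₁ (∂₂ f) q = ∂₂ (∂₁ f) q :=
  hf.contDiffAt.fderiv_apply_fderiv_apply_comm _ _

theorem sq_add_sq_pos_of_ne_zero {q : ℝ × ℝ} (hq : q ≠ 0) : 0 < q.1 ^ 2 + q.2 ^ 2 := by
  have : q.1 ≠ 0 ∨ q.2 ≠ 0 := by
    contrapose! hq
    exact Prod.ext hq.1 hq.2
  rcases this with h | h <;> positivity

theorem hasDerivAt_radius_fst {q : ℝ × ℝ} (hq : q ≠ 0) :
    HasDerivAt (fun t => radius (t, q.2)) (q.1 / radius q) q.1 := by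
  have h := ((hasDerivAt_pow 2 q.1).add_const (q.2 ^ 2)).sqrt
    (sq_add_sq_pos_of_ne_zero hq).ne'
  refine h.congr_deriv ?_
  rw [radius]
  field_simp
  ring

theorem hasDerivAt_radius_snd {q : ℝ × ℝ} (hq : q ≠ 0) :
    HasDerivAt (fun t => radius (q.1, t)) (q.2 / radius q) q.2 := by
  have h := ((hasDerivAt_pow 2 q.2).const_add (q.1 ^ 2)).sqrt
    (sq_add_sq_pos_of_ne_zero hq).ne'
  refine h.congr_deriv ?_
  rw [radius]
  field_simp
  ring

theorem radius_pos {q : ℝ × ℝ} (hq : q ≠ 0) : 0 < radius q :=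
  Real.sqrt_pos.mpr (sq_add_sq_pos_of_ne_zero hq)

theorem radius_sq (q : ℝ × ℝ) : radius q ^ 2 = q.1 ^ 2 + q.2 ^ 2 :=
  Real.sq_sqrt (by positivity)

theorem hasDerivAt_I_mul_ofReal (x : ℝ) : HasDerivAt (fun t : ℝ => I * t) I x := by
  simpa using (hasDerivAt_id x).ofReal_comp.const_mul I

section FirstOrder

variable {f : ℝ × ℝ → ℂ} (hf : Differentiable ℝ f)
include hf

theorem dilationOp_eq :
    dilationOp f = fun q => I * q.1 * ∂₁ f q + I * q.2 * ∂₂ f q + I / 2 * f q := by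
  funext q
  simp only [dilationOp, lineDerivFst_eq_partialFst hf, lineDerivSnd_eq_partialSnd hf]

theorem rotationOp_eq : rotationOp f = fun q => I * q.2 * ∂₁ f q - I * q.1 * ∂₂ f q := by
  funext q
  simp only [rotationOp, lineDerivFst_eq_partialFst hf, lineDerivSnd_eq_partialSnd hf]

theorem boostOp₁_eq : boostOp₁ f = fun q => -I * radius q * ∂₂ f q := by
  funext q
  simp only [boostOp₁, lineDerivSnd_eq_partialSnd hf]

theorem boostOp₂_eq : boostOp₂ f = fun q => I * radius q * ∂₁ f q := by
  funext q
  simp only [boostOp₂, lineDerivFst_eq_partialFst hf]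

end FirstOrder

section SecondOrder

variable {ψ : ℝ × ℝ → ℂ} (hψ : ContDiff ℝ 2 ψ) (p : ℝ × ℝ)
include hψ

theorem dilationOp_dilationOp :
    dilationOp (dilationOp ψ) p = -(2 * p.1 * ∂₁ ψ p + 2 * p.2 * ∂₂ ψ p + p.1 ^ 2 * ∂₁ (∂₁ ψ) p
      + 2 * p.1 * p.2 * ∂₂ (∂₁ ψ) p + p.2 ^ 2 * ∂₂ (∂₂ ψ) p + ψ p / 4) := by
  have hd := hψ.differentiable two_ne_zero
  have hd₁ := hψ.partialFst.differentiable one_ne_zero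
  have hd₂ := hψ.partialSnd.differentiable one_ne_zero
  have h₁ : lineDerivFst (dilationOp ψ) p = I * ∂₁ ψ p + I * p.1 * ∂₁ (∂₁ ψ) p
      + I * p.2 * ∂₁ (∂₂ ψ) p + I / 2 * ∂₁ ψ p := by
    rw [lineDerivFst, dilationOp_eq hd]
    exact ((((hasDerivAt_I_mul_ofReal p.1).mul (hd₁ p).hasDerivAt_comp_mk_left).add
      ((hd₂ p).hasDerivAt_comp_mk_left.const_mul (I * p.2))).add
      ((hd p).hasDerivAt_comp_mk_left.const_mul (I / 2))).deriv
  have h₂ : lineDerivSnd (dilationOp ψ) p = I * p.1 * ∂₂ (∂₁ ψ) p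
      + (I * ∂₂ ψ p + I * p.2 * ∂₂ (∂₂ ψ) p) + I / 2 * ∂₂ ψ p := by
    rw [lineDerivSnd, dilationOp_eq hd]
    exact ((((hd₁ p).hasDerivAt_comp_mk_right.const_mul (I * p.1)).add
      ((hasDerivAt_I_mul_ofReal p.2).mul (hd₂ p).hasDerivAt_comp_mk_right)).add
      ((hd p).hasDerivAt_comp_mk_right.const_mul (I / 2))).deriv
  rw [dilationOp, h₁, h₂, partialFst_partialSnd_comm hψ, dilationOp_eq hd]
  linear_combination (2 * p.1 * ∂₁ ψ p + 2 * p.2 * ∂₂ ψ p + p.1 ^ 2 * ∂₁ (∂₁ ψ) p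
      + 2 * p.1 * p.2 * ∂₂ (∂₁ ψ) p + p.2 ^ 2 * ∂₂ (∂₂ ψ) p + ψ p / 4) * I_sq

theorem rotationOp_rotationOp :
    rotationOp (rotationOp ψ) p = p.1 * ∂₁ ψ p + p.2 * ∂₂ ψ p - p.2 ^ 2 * ∂₁ (∂₁ ψ) p
      + 2 * p.1 * p.2 * ∂₂ (∂₁ ψ) p - p.1 ^ 2 * ∂₂ (∂₂ ψ) p := by
  have hd := hψ.differentiable two_ne_zero
  have hd₁ := hψ.partialFst.differentiable one_ne_zero
  have hd₂ := hψ.partialSnd.differentiable one_ne_zero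
  have h₁ : lineDerivFst (rotationOp ψ) p = I * p.2 * ∂₁ (∂₁ ψ) p
      - (I * ∂₂ ψ p + I * p.1 * ∂₁ (∂₂ ψ) p) := by
    rw [lineDerivFst, rotationOp_eq hd]
    exact (((hd₁ p).hasDerivAt_comp_mk_left.const_mul (I * p.2)).sub
      ((hasDerivAt_I_mul_ofReal p.1).mul (hd₂ p).hasDerivAt_comp_mk_left)).deriv
  have h₂ : lineDerivSnd (rotationOp ψ) p = (I * ∂₁ ψ p + I * p.2 * ∂₂ (∂₁ ψ) p)
      - I * p.1 * ∂₂ (∂₂ ψ) p := by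
    rw [lineDerivSnd, rotationOp_eq hd]
    exact (((hasDerivAt_I_mul_ofReal p.2).mul (hd₁ p).hasDerivAt_comp_mk_right).sub
      ((hd₂ p).hasDerivAt_comp_mk_right.const_mul (I * p.1))).deriv
  rw [rotationOp, h₁, h₂, partialFst_partialSnd_comm hψ]
  linear_combination -(p.1 * ∂₁ ψ p + p.2 * ∂₂ ψ p - p.2 ^ 2 * ∂₁ (∂₁ ψ) p
      + 2 * p.1 * p.2 * ∂₂ (∂₁ ψ) p - p.1 ^ 2 * ∂₂ (∂₂ ψ) p) * I_sq

variable {p}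

theorem boostOp₁_boostOp₁ (hp : p ≠ 0) :
    boostOp₁ (boostOp₁ ψ) p = -(p.2 * ∂₂ ψ p + (p.1 ^ 2 + p.2 ^ 2) * ∂₂ (∂₂ ψ) p) := by
  have hd := hψ.differentiable two_ne_zero
  have hd₂ := hψ.partialSnd.differentiable one_ne_zero
  have h₂ : lineDerivSnd (boostOp₁ ψ) p = -I * ((p.2 / radius p : ℝ) : ℂ) * ∂₂ ψ p
      + -I * radius p * ∂₂ (∂₂ ψ) p := by
    rw [lineDerivSnd, boostOp₁_eq hd]
    exact (((hasDerivAt_radius_snd hp).ofReal_comp.const_mul (-I)).mul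
      (hd₂ p).hasDerivAt_comp_mk_right).deriv
  have hr : (radius p : ℂ) * ((p.2 / radius p : ℝ) : ℂ) = p.2 := by
    rw [← ofReal_mul, mul_div_cancel₀ _ (radius_pos hp).ne']
  have hr2 : (radius p : ℂ) ^ 2 = p.1 ^ 2 + p.2 ^ 2 := by exact_mod_cast radius_sq p
  rw [boostOp₁, h₂]
  linear_combination I ^ 2 * ∂₂ ψ p * hr + I ^ 2 * ∂₂ (∂₂ ψ) p * hr2
    + (p.2 * ∂₂ ψ p + (p.1 ^ 2 + p.2 ^ 2) * ∂₂ (∂₂ ψ) p) * I_sq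

theorem boostOp₂_boostOp₂ (hp : p ≠ 0) :
    boostOp₂ (boostOp₂ ψ) p = -(p.1 * ∂₁ ψ p + (p.1 ^ 2 + p.2 ^ 2) * ∂₁ (∂₁ ψ) p) := by
  have hd := hψ.differentiable two_ne_zero
  have hd₁ := hψ.partialFst.differentiable one_ne_zero
  have h₁ : lineDerivFst (boostOp₂ ψ) p = I * ((p.1 / radius p : ℝ) : ℂ) * ∂₁ ψ p
      + I * radius p * ∂₁ (∂₁ ψ) p := by
    rw [lineDerivFst, boostOp₂_eq hd]
    exact (((hasDerivAt_radius_fst hp).ofReal_comp.const_mul I).mul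
      (hd₁ p).hasDerivAt_comp_mk_left).deriv
  have hr : (radius p : ℂ) * ((p.1 / radius p : ℝ) : ℂ) = p.1 := by
    rw [← ofReal_mul, mul_div_cancel₀ _ (radius_pos hp).ne']
  have hr2 : (radius p : ℂ) ^ 2 = p.1 ^ 2 + p.2 ^ 2 := by exact_mod_cast radius_sq p
  rw [boostOp₂, h₁]
  linear_combination I ^ 2 * ∂₁ ψ p * hr + I ^ 2 * ∂₁ (∂₁ ψ) p * hr2
    + (p.1 * ∂₁ ψ p + (p.1 ^ 2 + p.2 ^ 2) * ∂₁ (∂₁ ψ) p) * I_sq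

end SecondOrder

end

/-- For twice continuously differentiable `ψ : ℝ² → ℂ` and
`p = (p₁, p₂) ≠ (0, 0)`, the deformed (generalized Casimir) relation
`(−D̂² − (Ĵ⁰)² + (Ĵ¹)² + (Ĵ²)²)ψ = (1/4)ψ` holds at `p`, where
`Ĵ⁰ψ = i p₂ ∂ψ/∂p₁ − i p₁ ∂ψ/∂p₂`, `Ĵ¹ψ = −i√(p₁²+p₂²) ∂ψ/∂p₂`,
`Ĵ²ψ = i√(p₁²+p₂²) ∂ψ/∂p₁`, `D̂ψ = i p₁ ∂ψ/∂p₁ + i p₂ ∂ψ/∂p₂ + (i/2)ψ`. -/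
theorem stmt18 (ψ : ℝ × ℝ → ℂ) (hψ : ContDiff ℝ 2 ψ) (p : ℝ × ℝ)
    (hp : p ≠ (0, 0)) :
    let d1 : (ℝ × ℝ → ℂ) → ℝ × ℝ → ℂ := fun f q => deriv (fun t => f (t, q.2)) q.1
    let d2 : (ℝ × ℝ → ℂ) → ℝ × ℝ → ℂ := fun f q => deriv (fun t => f (q.1, t)) q.2
    let r : ℝ × ℝ → ℝ := fun q => Real.sqrt (q.1 ^ 2 + q.2 ^ 2)
    let J0 : (ℝ × ℝ → ℂ) → ℝ × ℝ → ℂ := fun f q =>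
      Complex.I * (q.2 : ℂ) * d1 f q - Complex.I * (q.1 : ℂ) * d2 f q
    let J1 : (ℝ × ℝ → ℂ) → ℝ × ℝ → ℂ := fun f q => -Complex.I * (r q : ℂ) * d2 f q
    let J2 : (ℝ × ℝ → ℂ) → ℝ × ℝ → ℂ := fun f q => Complex.I * (r q : ℂ) * d1 f q
    let D : (ℝ × ℝ → ℂ) → ℝ × ℝ → ℂ := fun f q =>
      Complex.I * (q.1 : ℂ) * d1 f q + Complex.I * (q.2 : ℂ) * d2 f q +
        Complex.I / 2 * f q
    (-D (D ψ) p - J0 (J0 ψ) p + J1 (J1 ψ) p + J2 (J2 ψ) p = 1 / 4 * ψ p) := by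
  show -dilationOp (dilationOp ψ) p - rotationOp (rotationOp ψ) p
    + boostOp₁ (boostOp₁ ψ) p + boostOp₂ (boostOp₂ ψ) p = 1 / 4 * ψ p
  rw [dilationOp_dilationOp hψ, rotationOp_rotationOp hψ, boostOp₁_boostOp₁ hψ hp,
    boostOp₂_boostOp₂ hψ hp]
  ring
end

section
/- For real parameters a, b, c, define h : ℝ × ℝ × ℝ → ℝ by h(d, j, α) = |d|·(1 + b·sin α − c·cos α) + sgn(d)·j·(a + b·cos α + c·sin α), where sgn(d) is the sign of d (with sgn(0) = 0). If a = b = c = 0 then h(d, j, α) = |d| ≥ 0 for all (d, j, α). Conversely, if (a, b, c) ≠ (0, 0, 0), then h is unbounded from below, i.e., for every M ∈ ℝ there exist (d, j, α) with d ≠ 0 and h(d, j, α) < M. -/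
/-- For `h(d, j, α) = |d|(1 + b sin α − c cos α)
+ sgn(d)·j·(a + b cos α + c sin α)`: if `a = b = c = 0` then
`h(d, j, α) = |d| ≥ 0` everywhere; conversely, if `(a, b, c) ≠ (0, 0, 0)`
then `h` is unbounded from below, i.e. for every `M` there are `(d, j, α)`
with `d ≠ 0` and `h(d, j, α) < M`. -/
theorem stmt19 (a b c : ℝ) :
    let h : ℝ → ℝ → ℝ → ℝ := fun d j α =>
      |d| * (1 + b * Real.sin α - c * Real.cos α) +
        Real.sign d * j * (a + b * Real.cos α + c * Real.sin α)
    ((a = 0 ∧ b = 0 ∧ c = 0) →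
        ∀ d j α : ℝ, h d j α = |d| ∧ 0 ≤ h d j α) ∧
      ((a, b, c) ≠ ((0 : ℝ), (0 : ℝ), (0 : ℝ)) →
        ∀ M : ℝ, ∃ d j α : ℝ, d ≠ 0 ∧ h d j α < M) := by
  intro h
  constructor
  · rintro ⟨ha, hb, hc⟩ d j α
    simp only [h, ha, hb, hc]
    constructor
    · ring
    · have := abs_nonneg d
      nlinarith [abs_nonneg d]
  · intro hne M
    have hα : ∃ α : ℝ, a + b * Real.cos α + c * Real.sin α ≠ 0 := by
      by_contra hall
      push_neg at hall
      have h0 := hall 0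
      have hpi := hall Real.pi
      have hhalf := hall (Real.pi / 2)
      simp [Real.cos_pi, Real.sin_pi, Real.cos_pi_div_two, Real.sin_pi_div_two] at h0 hpi hhalf
      apply hne
      have ha : a = 0 := by linarith
      have hb : b = 0 := by linarith
      have hc : c = 0 := by linarith
      simp [ha, hb, hc]
    obtain ⟨α, hk⟩ := hα
    set k := a + b * Real.cos α + c * Real.sin α with hkdef
    set C := 1 + b * Real.sin α - c * Real.cos α with hCdef
    refine ⟨1, (M - 1 - C) / k, α, one_ne_zero, ?_⟩
    simp only [h, abs_one, Real.sign_one, one_mul]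
    rw [div_mul_cancel₀ _ hk]
    linarith
end
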